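/- Let X = (X_n)_{n∈ℕ} be a random sequence of binary trees with, almost surely, |X_n| = n, X_n ⊂ X_{n+1}, and ∪_n X_n = V. Suppose there is a random Borel probability measure M on V_∞ that has full support with probability one (M(B_u) > 0 for all u ∈ V a.s.) such that ℒ(X | M = μ) = DST(μ) for ℒ(M)-almost all μ. Then X is locally exchangeable: for every u ∈ V, the local increment process Y(u) is an exchangeable sequence. -/
import Mathlib


open MeasureTheory ProbabilityTheory Filter Topology
open scoped ENNReal NNReal

namespace DMTCS

/-- `V = {0,1}^*`: the set of finite binary words. -/
abbrev Word : Type := List Bool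

/-- `V_∞ = {0,1}^ℕ`: infinite binary sequences, with the product (Borel) σ-field. -/
abbrev BSeq : Type := ℕ → Bool

/-- The prefix of length `k` of an infinite sequence. -/
def prefixSeq (v : BSeq) (k : ℕ) : Word := List.ofFn (fun i : Fin k => v i)

/-- The cylinder set `B_u = {v ∈ V_∞ : u is a prefix of v}`. -/
def cyl (u : Word) : Set BSeq := {v | prefixSeq v u.length = u}

/-- A (finite) binary tree: a prefix-stable finite set of words. -/
def IsBinTree (x : Finset Word) : Prop := ∀ v ∈ x, v ≠ [] → v.dropLast ∈ x

/-- The number of nodes of the subtree of `x` rooted at `u`, i.e. `|{v : u+v ∈ x}|`. -/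
def subCard (x : Finset Word) (u : Word) : ℕ := (x.filter (fun w => u <+: w)).card

/-- The relative subtree size function `t(x,u)`. -/
noncomputable def stf (x : Finset Word) (u : Word) : ℝ := (subCard x u : ℝ) / (x.card : ℝ)

instance : MeasurableSpace (Finset Word) := ⊤

/-- Entry time of node `w` into the increasing tree sequence `x`. -/
noncomputable def entryTime (x : ℕ → Finset Word) (w : Word) : ℕ := sInf {n | w ∈ x n}

/-- The local increment process at `u`: `locInc x u n` is `1` if the right subtree of `u`
receives a node at time `τ_u + n + 1`, `-1` if the left subtree does, and `0` otherwise. -/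
noncomputable def locInc (x : ℕ → Finset Word) (u : Word) (n : ℕ) : ℤ :=
  if subCard (x (entryTime x u + n + 1)) (u ++ [true])
       > subCard (x (entryTime x u + n)) (u ++ [true]) then 1
  else if subCard (x (entryTime x u + n + 1)) (u ++ [false])
       > subCard (x (entryTime x u + n)) (u ++ [false]) then -1
  else 0

/-- A sequence of random variables is exchangeable if its joint law is invariant under
every permutation of finitely many coordinates. -/
def Exchangeable {Ω : Type*} [MeasurableSpace Ω] (P : Measure Ω) (Y : ℕ → Ω → ℤ) : Prop :=
  ∀ π : Equiv.Perm ℕ, {n | π n ≠ n}.Finite →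
    Measure.map (fun ω => fun n => Y (π n) ω) P = Measure.map (fun ω => fun n => Y n ω) P

@[simp] lemma length_prefixSeq (v : BSeq) (k : ℕ) : (prefixSeq v k).length = k := by
  simp [prefixSeq]

lemma prefixSeq_take (v : BSeq) {k l : ℕ} (h : k ≤ l) :
    (prefixSeq v l).take k = prefixSeq v k := by
  apply List.ext_getElem
  · simp [length_prefixSeq, Nat.min_eq_left h]
  · intro i h1 h2
    simp only [prefixSeq, List.getElem_take, List.getElem_ofFn]

lemma prefix_eq_prefixSeq {p : Word} {v : BSeq} {l : ℕ} (h : p <+: prefixSeq v l) :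
    p = prefixSeq v p.length := by
  have hl : p.length ≤ l := by
    have := h.length_le; simpa using this
  rw [List.prefix_iff_eq_take] at h
  rw [h, prefixSeq_take v hl, length_prefixSeq]

lemma mem_cyl {b : BSeq} {w : Word} : b ∈ cyl w ↔ prefixSeq b w.length = w := Iff.rfl

lemma prefixSeq_of_mem_cyl {b : BSeq} {w : Word} (hb : b ∈ cyl w) {k : ℕ}
    (hk : k ≤ w.length) : prefixSeq b k = w.take k := by
  conv_rhs => rw [← mem_cyl.mp hb]
  rw [prefixSeq_take b hk]

lemma prefix_of_mem_cyl_inter {b : BSeq} {w w' : Word} (h : b ∈ cyl w) (h' : b ∈ cyl w')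
    (hl : w.length ≤ w'.length) : w <+: w' := by
  have : w = w'.take w.length := by
    rw [← prefixSeq_of_mem_cyl h' hl, mem_cyl.mp h]
  rw [this]; exact List.take_prefix _ _

instance : MeasurableSpace Word := ⊤
instance : MeasurableSingletonClass Word := ⟨fun _ => trivial⟩
instance : MeasurableSingletonClass (Finset Word) := ⟨fun _ => trivial⟩

lemma prefixSeq_succ (b : BSeq) (k : ℕ) :
    prefixSeq b (k + 1) = (prefixSeq b k).concat (b k) := by
  unfold prefixSeq
  rw [List.ofFn_succ']
  rfl

lemma measurable_prefixSeq (k : ℕ) : Measurable (fun b : BSeq => prefixSeq b k) := by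
  induction k with
  | zero =>
    have : (fun b : BSeq => prefixSeq b 0) = fun _ => ([] : Word) := by
      funext b; simp [prefixSeq]
    rw [this]; exact measurable_const
  | succ k ih =>
    have : (fun b : BSeq => prefixSeq b (k+1))
        = (fun p : Word × Bool => p.1.concat p.2) ∘ (fun b => (prefixSeq b k, b k)) := by
      funext b; simp [prefixSeq_succ]
    rw [this]
    exact (measurable_of_countable _).comp (ih.prodMk (measurable_pi_apply k))

lemma measurableSet_cyl (w : Word) : MeasurableSet (cyl w) := by
  have : cyl w = (fun b : BSeq => prefixSeq b w.length) ⁻¹' {w} := rfl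
  rw [this]
  exact measurable_prefixSeq w.length (measurableSet_singleton w)

lemma IsBinTree.prefix_mem {x : Finset Word} (hx : IsBinTree x) :
    ∀ w, w ∈ x → ∀ p, p <+: w → p ∈ x := by
  intro w
  induction w using List.reverseRecOn with
  | nil => intro hw p hp; rwa [List.prefix_nil.mp hp]
  | append_singleton l a ih =>
    intro hw p hp
    rcases List.prefix_concat_iff.mp hp with h | h
    · rwa [h]
    · have hl : l ∈ x := by
        have := hx _ hw (by simp)
        simpa [List.dropLast_concat] using this
      exact ih hl p h

lemma subCard_insert {x : Finset Word} {w : Word} (hw : w ∉ x) (p : Word) :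
    subCard (insert w x) p = subCard x p + if p <+: w then 1 else 0 := by
  unfold subCard
  rw [Finset.filter_insert]
  split
  · rw [Finset.card_insert_of_notMem (fun hc => hw (Finset.mem_filter.mp hc).1)]
  · simp

lemma subCard_insert_lt_iff {x : Finset Word} {w : Word} (hw : w ∉ x) (p : Word) :
    subCard x p < subCard (insert w x) p ↔ p <+: w := by
  rw [subCard_insert hw p]
  split <;> simp_all


/-! ### Exit node -/

noncomputable def exitLen (x : Finset Word) (b : BSeq) : ℕ := sInf {k | prefixSeq b k ∉ x}
noncomputable def exitNode (x : Finset Word) (b : BSeq) : Word := prefixSeq b (exitLen x b)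

lemma exitSet_nonempty (x : Finset Word) (b : BSeq) : {k | prefixSeq b k ∉ x}.Nonempty := by
  by_contra h
  rw [Set.not_nonempty_iff_eq_empty] at h
  have hall : ∀ k, prefixSeq b k ∈ x := by
    intro k; by_contra hk
    have hk2 : k ∈ {k | prefixSeq b k ∉ x} := hk
    rw [h] at hk2
    exact hk2
  have hinj : Set.InjOn (fun k => prefixSeq b k) (Finset.range (x.card + 1)) := by
    intro a _ c _ hac
    have := congrArg List.length hac
    simpa using this
  have hcard := Finset.card_le_card_of_injOn (fun k => prefixSeq b k)
    (fun a _ => hall a) hinj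
  simp at hcard

lemma exitNode_notMem (x : Finset Word) (b : BSeq) : exitNode x b ∉ x :=
  Nat.sInf_mem (exitSet_nonempty x b)

lemma mem_of_lt_exitLen {x : Finset Word} {b : BSeq} {k : ℕ} (h : k < exitLen x b) :
    prefixSeq b k ∈ x := by
  by_contra hk
  have h2 : exitLen x b ≤ k := Nat.sInf_le hk
  omega

@[simp] lemma length_exitNode (x : Finset Word) (b : BSeq) :
    (exitNode x b).length = exitLen x b := by simp [exitNode]

lemma mem_cyl_exitNode (x : Finset Word) (b : BSeq) : b ∈ cyl (exitNode x b) := by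
  rw [mem_cyl, length_exitNode]; rfl

lemma exitLen_pos {x : Finset Word} (hx : [] ∈ x) (b : BSeq) : 0 < exitLen x b := by
  rcases Nat.eq_zero_or_pos (exitLen x b) with h | h
  · exfalso
    have := exitNode_notMem x b
    rw [exitNode, h] at this
    exact this (by simpa [prefixSeq] using hx)
  · exact h

lemma exitNode_eq {x : Finset Word} {w : Word} {b : BSeq}
    (hpre : ∀ k < w.length, w.take k ∈ x) (hw : w ∉ x) (hb : b ∈ cyl w) :
    exitNode x b = w := by
  have hlen : exitLen x b = w.length := by
    apply le_antisymm
    · exact Nat.sInf_le (by rw [Set.mem_setOf_eq, mem_cyl.mp hb]; exact hw)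
    · by_contra h
      push_neg at h
      have hmem := Nat.sInf_mem (exitSet_nonempty x b)
      have : prefixSeq b (exitLen x b) ∈ x := by
        rw [prefixSeq_of_mem_cyl hb (le_of_lt h)]
        exact hpre _ h
      exact hmem this
  rw [exitNode, hlen, mem_cyl.mp hb]

lemma prefix_exitNode_iff {x : Finset Word} (hx : IsBinTree x) {u : Word} (hu : u ∈ x)
    (c : Bool) (b : BSeq) :
    (u ++ [c]) <+: exitNode x b ↔ b ∈ cyl (u ++ [c]) := by
  constructor
  · intro h
    have h' : (u ++ [c]) <+: prefixSeq b (exitLen x b) := h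
    have := prefix_eq_prefixSeq h'
    rw [mem_cyl]
    exact this.symm
  · intro hb
    have hlen : u.length + 1 ≤ exitLen x b := by
      by_contra h
      push_neg at h
      have hmem := Nat.sInf_mem (exitSet_nonempty x b)
      have hle : exitLen x b ≤ u.length := by omega
      have : prefixSeq b (exitLen x b) ∈ x := by
        rw [prefixSeq_of_mem_cyl hb (by simp; omega)]
        have htake : (u ++ [c]).take (exitLen x b) = u.take (exitLen x b) :=
          List.take_append_of_le_length hle
        rw [htake]
        exact hx.prefix_mem u hu _ (List.take_prefix _ u)
      exact hmem this
    have : u ++ [c] = prefixSeq b (u.length + 1) := by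
      have := mem_cyl.mp hb
      rw [← this]; congr 1; simp
    rw [this]
    have := prefixSeq_take b hlen
    rw [← this]
    exact List.take_prefix _ _

/-! ### Finite tree histories -/

def treeAt {m : ℕ} (v : Fin m → Word) (j : ℕ) : Finset Word :=
  insert [] ((Finset.univ.filter (fun i : Fin m => (i : ℕ) < j)).image v)

def Valid {m : ℕ} (v : Fin m → Word) : Prop :=
  ∀ i : Fin m, v i ∉ treeAt v (i : ℕ) ∧ v i ≠ [] ∧ (v i).dropLast ∈ treeAt v (i : ℕ)

lemma nil_mem_treeAt {m : ℕ} (v : Fin m → Word) (j : ℕ) : [] ∈ treeAt v j :=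
  Finset.mem_insert_self _ _

@[simp] lemma treeAt_zero {m : ℕ} (v : Fin m → Word) : treeAt v 0 = {[]} := by
  simp [treeAt]

lemma treeAt_succ {m : ℕ} (v : Fin m → Word) {j : ℕ} (h : j < m) :
    treeAt v (j + 1) = insert (v ⟨j, h⟩) (treeAt v j) := by
  unfold treeAt
  rw [Finset.insert_comm]
  congr 1
  have : Finset.univ.filter (fun i : Fin m => (i : ℕ) < j + 1)
      = insert ⟨j, h⟩ (Finset.univ.filter (fun i : Fin m => (i : ℕ) < j)) := by
    ext i
    simp only [Finset.mem_filter, Finset.mem_univ, true_and, Finset.mem_insert]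
    constructor
    · intro hi
      rcases Nat.lt_succ_iff_lt_or_eq.mp hi with h' | h'
      · exact Or.inr h'
      · exact Or.inl (Fin.ext h')
    · rintro (rfl | hi)
      · simp
      · omega
  rw [this, Finset.image_insert]

lemma treeAt_ge {m : ℕ} (v : Fin m → Word) {j : ℕ} (h : m ≤ j) :
    treeAt v j = treeAt v m := by
  unfold treeAt
  congr 2
  ext i
  simp only [Finset.mem_filter, Finset.mem_univ, true_and]
  have := i.isLt
  omega

lemma treeAt_mono {m : ℕ} (v : Fin m → Word) {j j' : ℕ} (h : j ≤ j') :
    treeAt v j ⊆ treeAt v j' := by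
  unfold treeAt
  apply Finset.insert_subset_insert
  apply Finset.image_subset_image
  intro i
  simp only [Finset.mem_filter, Finset.mem_univ, true_and]
  omega

lemma treeAt_congr {m : ℕ} {v v' : Fin m → Word} {j : ℕ}
    (h : ∀ i : Fin m, (i : ℕ) < j → v i = v' i) : treeAt v j = treeAt v' j := by
  unfold treeAt
  congr 1
  apply Finset.image_congr
  intro i hi
  simp only [Finset.coe_filter, Finset.mem_univ, true_and, Set.mem_setOf_eq] at hi
  exact h i hi

lemma Valid.isBinTree {m : ℕ} {v : Fin m → Word} (hv : Valid v) (j : ℕ) :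
    IsBinTree (treeAt v j) := by
  induction j with
  | zero =>
    intro w hw hne
    rw [treeAt_zero, Finset.mem_singleton] at hw
    exact absurd hw hne
  | succ j ih =>
    rcases Nat.lt_or_ge j m with h | h
    · rw [treeAt_succ v h]
      intro w hw hne
      rcases Finset.mem_insert.mp hw with rfl | hw
      · exact Finset.mem_insert_of_mem (hv ⟨j, h⟩).2.2
      · exact Finset.mem_insert_of_mem (ih w hw hne)
    · rw [treeAt_ge v (by omega), ← treeAt_ge v h]
      exact ih

lemma Valid.take_mem {m : ℕ} {v : Fin m → Word} (hv : Valid v) (i : Fin m) :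
    ∀ k < (v i).length, (v i).take k ∈ treeAt v (i : ℕ) := by
  intro k hk
  have hd : (v i).dropLast ∈ treeAt v (i : ℕ) := (hv i).2.2
  have htree := hv.isBinTree (i : ℕ)
  apply htree.prefix_mem _ hd
  have h1 : (v i).take k <+: (v i).dropLast := by
    rw [List.dropLast_eq_take]
    have : (v i).take k = ((v i).take ((v i).length - 1)).take k := by
      rw [List.take_take]
      congr 1
      omega
    rw [this]
    exact List.take_prefix _ _
  exact h1


/-! ### The DST run on a finite key block -/

noncomputable def runTree {m : ℕ} (η : Fin m → BSeq) : ℕ → Finset Word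
  | 0 => {[]}
  | j + 1 =>
    if h : j < m then insert (exitNode (runTree η j) (η ⟨j, h⟩)) (runTree η j)
    else runTree η j

noncomputable def run {m : ℕ} (η : Fin m → BSeq) (i : Fin m) : Word :=
  exitNode (runTree η (i : ℕ)) (η i)

lemma runTree_succ {m : ℕ} (η : Fin m → BSeq) {j : ℕ} (h : j < m) :
    runTree η (j + 1) = insert (run η ⟨j, h⟩) (runTree η j) := by
  rw [runTree, dif_pos h]; rfl

lemma runTree_succ_ge {m : ℕ} (η : Fin m → BSeq) {j : ℕ} (h : m ≤ j) :
    runTree η (j + 1) = runTree η j := by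
  rw [runTree, dif_neg (by omega)]

lemma nil_mem_runTree {m : ℕ} (η : Fin m → BSeq) (j : ℕ) : [] ∈ runTree η j := by
  induction j with
  | zero => simp [runTree]
  | succ j ih =>
    rcases Nat.lt_or_ge j m with h | h
    · rw [runTree_succ η h]; exact Finset.mem_insert_of_mem ih
    · rwa [runTree_succ_ge η h]

lemma treeAt_run {m : ℕ} (η : Fin m → BSeq) (j : ℕ) :
    treeAt (run η) j = runTree η j := by
  induction j with
  | zero => simp [runTree]
  | succ j ih =>
    rcases Nat.lt_or_ge j m with h | h
    · rw [treeAt_succ (run η) h, runTree_succ η h, ih]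
    · rw [treeAt_ge (run η) (by omega : m ≤ j + 1), ← treeAt_ge (run η) h,
        runTree_succ_ge η h, ih]

lemma run_valid {m : ℕ} (η : Fin m → BSeq) : Valid (run η) := by
  intro i
  rw [treeAt_run]
  refine ⟨exitNode_notMem _ _, ?_, ?_⟩
  · have hpos : 0 < exitLen (runTree η (i : ℕ)) (η i) :=
      exitLen_pos (nil_mem_runTree η (i : ℕ)) (η i)
    intro hc
    have := congrArg List.length hc
    simp only [run, length_exitNode, List.length_nil] at this
    omega
  · unfold run exitNode
    set L := exitLen (runTree η (i : ℕ)) (η i) with hL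
    have hpos : 0 < L := exitLen_pos (nil_mem_runTree η (i : ℕ)) (η i)
    have hdl : (prefixSeq (η i) L).dropLast = prefixSeq (η i) (L - 1) := by
      rw [List.dropLast_eq_take, length_prefixSeq, prefixSeq_take _ (by omega)]
    rw [hdl]
    exact mem_of_lt_exitLen (by omega)

lemma mem_cyl_run {m : ℕ} (η : Fin m → BSeq) (i : Fin m) : η i ∈ cyl (run η i) :=
  mem_cyl_exitNode _ _

lemma run_eq_of_box {m : ℕ} {v : Fin m → Word} (hv : Valid v) {η : Fin m → BSeq}
    (h : ∀ i, η i ∈ cyl (v i)) : run η = v := by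
  have htree : ∀ j, runTree η j = treeAt v j := by
    intro j
    induction j with
    | zero => simp [runTree]
    | succ j ih =>
      rcases Nat.lt_or_ge j m with hj | hj
      · rw [runTree, dif_pos hj, ih, treeAt_succ v hj]
        congr 1
        exact exitNode_eq (hv.take_mem ⟨j, hj⟩) (hv ⟨j, hj⟩).1 (h ⟨j, hj⟩)
      · rw [runTree_succ_ge η hj, ih, treeAt_ge v (by omega : m ≤ j + 1), treeAt_ge v hj]
  funext i
  unfold run
  rw [htree]
  exact exitNode_eq (hv.take_mem i) (hv i).1 (h i)

lemma run_agree {m : ℕ} {η η' : Fin m → BSeq} {t : ℕ}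
    (h : ∀ i : Fin m, (i : ℕ) < t → η i = η' i) :
    ∀ j ≤ t, runTree η j = runTree η' j := by
  intro j hj
  induction j with
  | zero => rfl
  | succ j ih =>
    rcases Nat.lt_or_ge j m with hjm | hjm
    · rw [runTree, runTree, dif_pos hjm, dif_pos hjm, ih (by omega),
        h ⟨j, hjm⟩ (Nat.lt_of_succ_le hj)]
    · rw [runTree_succ_ge η hjm, runTree_succ_ge η' hjm, ih (by omega)]



/-! ### Increment patterns -/

noncomputable def val (u : Word) (a b : Finset Word) : ℤ :=
  if subCard b (u ++ [true]) > subCard a (u ++ [true]) then 1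
  else if subCard b (u ++ [false]) > subCard a (u ++ [false]) then -1
  else 0

lemma locInc_eq_val (x : ℕ → Finset Word) (u : Word) (n : ℕ) :
    locInc x u n = val u (x (entryTime x u + n)) (x (entryTime x u + n + 1)) := rfl

noncomputable def patY (u : Word) (t : ℕ) {m : ℕ} (v : Fin m → Word) (n : ℕ) : ℤ :=
  val u (treeAt v (t + n)) (treeAt v (t + n + 1))

def condTau (u : Word) (t : ℕ) {m : ℕ} (v : Fin m → Word) : Prop :=
  u ∈ treeAt v t ∧ ∀ j < t, u ∉ treeAt v j

def Idx (u : Word) (t N : ℕ) (d : ℕ → ℤ) : Set (Fin (t + N) → Word) :=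
  {v | Valid v ∧ condTau u t v ∧ ∀ n < N, patY u t v n = d n}

open Classical in
noncomputable def keyVal (u : Word) (b : BSeq) : ℤ :=
  if b ∈ cyl (u ++ [true]) then 1 else if b ∈ cyl (u ++ [false]) then -1 else 0

lemma patY_run {u : Word} {t N : ℕ} (η : Fin (t + N) → BSeq)
    (hτ : u ∈ treeAt (run η) t) {n : ℕ} (hn : n < N) :
    patY u t (run η) n = keyVal u (η ⟨t + n, by omega⟩) := by
  set i : Fin (t + N) := ⟨t + n, by omega⟩ with hi
  have hins : treeAt (run η) (t + n + 1) = insert (run η i) (treeAt (run η) (t + n)) :=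
    treeAt_succ (run η) (by omega)
  have hnm : run η i ∉ treeAt (run η) (t + n) := by
    have := (run_valid η i).1
    rwa [hi] at this
  have hu' : u ∈ treeAt (run η) (t + n) := treeAt_mono _ (by omega) hτ
  have htree : IsBinTree (treeAt (run η) (t + n)) := (run_valid η).isBinTree _
  have hiff : ∀ c : Bool, (subCard (treeAt (run η) (t + n + 1)) (u ++ [c])
      > subCard (treeAt (run η) (t + n)) (u ++ [c])) ↔ η i ∈ cyl (u ++ [c]) := by
    intro c
    rw [hins, gt_iff_lt, subCard_insert_lt_iff hnm]
    have hrun : run η i = exitNode (treeAt (run η) (t + n)) (η i) := by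
      rw [run, treeAt_run]
    rw [hrun]
    exact prefix_exitNode_iff htree hu' c (η i)
  unfold patY val keyVal
  classical
  rw [if_congr (hiff true) rfl rfl]
  rw [if_congr (hiff false) rfl rfl]

/-! ### Boxes -/

def box {m : ℕ} (v : Fin m → Word) : Set (Fin m → BSeq) := Set.univ.pi fun i => cyl (v i)

lemma measurableSet_box {m : ℕ} (v : Fin m → Word) : MeasurableSet (box v) :=
  MeasurableSet.univ_pi fun _ => measurableSet_cyl _

lemma mem_box_iff {m : ℕ} {v : Fin m → Word} {η : Fin m → BSeq} :
    η ∈ box v ↔ ∀ i, η i ∈ cyl (v i) := by simp [box]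

lemma iUnion_box_eq {m : ℕ} (S : Set (Fin m → Word)) (hS : ∀ v ∈ S, Valid v) :
    (⋃ v : S, box (v : Fin m → Word)) = run ⁻¹' S := by
  ext η
  simp only [Set.mem_iUnion, Set.mem_preimage]
  constructor
  · rintro ⟨⟨v, hv⟩, hb⟩
    have := run_eq_of_box (hS v hv) (fun i => mem_box_iff.mp hb i)
    rwa [this]
  · intro h
    exact ⟨⟨run η, h⟩, mem_box_iff.mpr fun i => mem_cyl_run η i⟩

lemma box_disjoint_of_valid {m : ℕ} {v v' : Fin m → Word} (hv : Valid v) (hv' : Valid v')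
    (hne : v ≠ v') : Disjoint (box v) (box v') := by
  rw [Set.disjoint_left]
  intro η h1 h2
  apply hne
  rw [← run_eq_of_box hv (fun i => mem_box_iff.mp h1 i),
    run_eq_of_box hv' (fun i => mem_box_iff.mp h2 i)]

lemma measurableSet_run_preimage {m : ℕ} (S : Set (Fin m → Word)) (hS : ∀ v ∈ S, Valid v) :
    MeasurableSet (run ⁻¹' S) := by
  rw [← iUnion_box_eq S hS]
  exact MeasurableSet.iUnion fun v => measurableSet_box _

lemma measure_run_preimage {m : ℕ} (μ : Measure BSeq) [IsProbabilityMeasure μ]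
    (S : Set (Fin m → Word)) (hS : ∀ v ∈ S, Valid v) :
    Measure.pi (fun _ : Fin m => μ) (run ⁻¹' S)
      = ∑' v : S, ∏ i, μ (cyl ((v : Fin m → Word) i)) := by
  rw [← iUnion_box_eq S hS]
  have hdis : Pairwise (Function.onFun Disjoint fun v : ↥S => box (v : Fin m → Word)) := by
    intro a b hab
    exact box_disjoint_of_valid (hS a.1 a.2) (hS b.1 b.2)
      (fun hc => hab (Subtype.ext hc))
  rw [measure_iUnion hdis (fun v => measurableSet_box _)]
  exact tsum_congr fun v => Measure.pi_pi _ _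


/-! ### Coordinate permutations -/

section Perm

variable {t N : ℕ} (π : Equiv.Perm ℕ)

noncomputable def permExtFun (hπ : ∀ n < N, π n < N) (j : Fin (t + N)) : Fin (t + N) :=
  if hj : (j : ℕ) < t then j
  else ⟨t + π ((j : ℕ) - t), by
    have h1 : (j : ℕ) - t < N := by have := j.isLt; omega
    have := hπ _ h1; omega⟩

noncomputable def permFin (hπ : ∀ n < N, π n < N) (hπ' : ∀ n < N, π.symm n < N) :
    Fin (t + N) ≃ Fin (t + N) where
  toFun := permExtFun π hπ
  invFun := permExtFun π.symm hπ'
  left_inv := by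
    intro j
    unfold permExtFun
    by_cases hj : (j : ℕ) < t
    · rw [dif_pos hj, dif_pos hj]
    · rw [dif_neg hj, dif_neg (by simp only [Fin.val_mk]; omega)]
      apply Fin.ext
      simp only [Fin.val_mk]
      rw [Nat.add_sub_cancel_left, Equiv.symm_apply_apply]
      omega
  right_inv := by
    intro j
    unfold permExtFun
    by_cases hj : (j : ℕ) < t
    · rw [dif_pos hj, dif_pos hj]
    · rw [dif_neg hj, dif_neg (by simp only [Fin.val_mk]; omega)]
      apply Fin.ext
      simp only [Fin.val_mk]
      rw [Nat.add_sub_cancel_left, Equiv.apply_symm_apply]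
      omega

variable (hπ : ∀ n < N, π n < N) (hπ' : ∀ n < N, π.symm n < N)

lemma permFin_lt {j : Fin (t + N)} (hj : (j : ℕ) < t) : permFin π hπ hπ' j = j := by
  show permExtFun π hπ j = j
  rw [permExtFun, dif_pos hj]

lemma permFin_shift {n : ℕ} (hn : n < N) :
    permFin π hπ hπ' ⟨t + n, by omega⟩
      = (⟨t + π n, by have h := hπ n hn; omega⟩ : Fin (t + N)) := by
  show permExtFun π hπ _ = _
  rw [permExtFun, dif_neg (by simp only [Fin.val_mk]; omega)]
  apply Fin.ext
  simp only [Fin.val_mk]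
  rw [Nat.add_sub_cancel_left]

lemma run_perm_preimage (u : Word) (d : ℕ → ℤ) :
    (fun η : Fin (t + N) → BSeq => fun j => η (permFin π hπ hπ' j)) ⁻¹' (run ⁻¹' Idx u t N d)
      = run ⁻¹' Idx u t N (fun n => d (π.symm n)) := by
  ext η
  simp only [Set.mem_preimage]
  set Rη : Fin (t + N) → BSeq := fun j => η (permFin π hπ hπ' j) with hRη
  have hagree : ∀ j ≤ t, runTree Rη j = runTree η j :=
    run_agree (fun i hi => by
      show η (permFin π hπ hπ' i) = η i
      rw [permFin_lt π hπ hπ' hi])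
  have htrees : ∀ j ≤ t, treeAt (run Rη) j = treeAt (run η) j := by
    intro j hj
    rw [treeAt_run, treeAt_run, hagree j hj]
  have hcond : condTau u t (run Rη) ↔ condTau u t (run η) := by
    unfold condTau
    rw [htrees t le_rfl]
    constructor
    · rintro ⟨h1, h2⟩
      exact ⟨h1, fun j hj => by rw [← htrees j (le_of_lt hj)]; exact h2 j hj⟩
    · rintro ⟨h1, h2⟩
      exact ⟨h1, fun j hj => by rw [htrees j (le_of_lt hj)]; exact h2 j hj⟩
  constructor
  · rintro ⟨hval, hτ, hY⟩
    have hτ' : condTau u t (run η) := hcond.mp hτ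
    refine ⟨run_valid η, hτ', ?_⟩
    intro k hk
    have hsk : π.symm k < N := hπ' k hk
    have h1 := hY _ hsk
    rw [patY_run Rη hτ.1 hsk] at h1
    rw [patY_run η hτ'.1 hk]
    show keyVal u (η ⟨t + k, by omega⟩) = d (π.symm k)
    rw [← h1]
    congr 1
    show η _ = η (permFin π hπ hπ' ⟨t + π.symm k, by omega⟩)
    rw [permFin_shift π hπ hπ' hsk]
    exact congrArg η (Fin.ext (by simp))
  · rintro ⟨hval, hτ, hY⟩
    have hτ' : condTau u t (run Rη) := hcond.mpr hτ
    refine ⟨run_valid Rη, hτ', ?_⟩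
    intro n hn
    have hπn : π n < N := hπ n hn
    have h2 := hY _ hπn
    rw [patY_run η hτ.1 hπn] at h2
    rw [patY_run Rη hτ'.1 hn]
    show keyVal u (Rη ⟨t + n, by omega⟩) = d n
    have h3 : (fun m => d (π.symm m)) (π n) = d n := by simp
    rw [h3] at h2
    rw [← h2]
    congr 1
    show η (permFin π hπ hπ' ⟨t + n, by omega⟩) = η ⟨t + π n, by omega⟩
    rw [permFin_shift π hπ hπ' hn]

lemma measurePreserving_permFin (μ : Measure BSeq) [IsProbabilityMeasure μ] :
    MeasurePreserving (fun η : Fin (t + N) → BSeq => fun j => η (permFin π hπ hπ' j))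
      (Measure.pi fun _ : Fin (t + N) => μ) (Measure.pi fun _ : Fin (t + N) => μ) := by
  have h := measurePreserving_piCongrLeft (fun _ : Fin (t + N) => μ) (permFin π hπ hπ').symm
  have heq : (fun η : Fin (t + N) → BSeq => fun j => η (permFin π hπ hπ' j))
      = ⇑(MeasurableEquiv.piCongrLeft (fun _ : Fin (t + N) => BSeq) (permFin π hπ hπ').symm) := by
    funext η
    funext b
    rw [MeasurableEquiv.coe_piCongrLeft]
    have := Equiv.piCongrLeft_apply_apply (fun _ : Fin (t + N) => BSeq)
      (permFin π hπ hπ').symm η (permFin π hπ hπ' b)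
    rw [Equiv.symm_apply_apply] at this
    rw [this]
  rw [heq]
  exact h

end Perm

lemma core_perm {t N : ℕ} (π : Equiv.Perm ℕ) (hπ : ∀ n < N, π n < N)
    (hπ' : ∀ n < N, π.symm n < N) (u : Word) (d : ℕ → ℤ)
    (μ : Measure BSeq) [IsProbabilityMeasure μ] :
    (∑' v : Idx u t N (fun n => d (π.symm n)), ∏ i, μ (cyl ((v : Fin (t + N) → Word) i)))
      = ∑' v : Idx u t N d, ∏ i, μ (cyl ((v : Fin (t + N) → Word) i)) := by
  have hv1 : ∀ v ∈ Idx u t N (fun n => d (π.symm n)), Valid v := fun v hv => hv.1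
  have hv2 : ∀ v ∈ Idx u t N d, Valid v := fun v hv => hv.1
  rw [← measure_run_preimage μ _ hv1, ← measure_run_preimage μ _ hv2]
  rw [← run_perm_preimage π hπ hπ' u d]
  exact (measurePreserving_permFin π hπ hπ' μ).measure_preimage
    (measurableSet_run_preimage _ hv2).nullMeasurableSet


/-! ### The probability-side decomposition -/

lemma sInf_eq_of_mem {S : Set ℕ} {t : ℕ} (h1 : t ∈ S) (h2 : ∀ j < t, j ∉ S) :
    sInf S = t := by
  have hle : sInf S ≤ t := Nat.sInf_le h1
  rcases Nat.lt_or_ge (sInf S) t with h | h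
  · exact absurd (Nat.sInf_mem ⟨t, h1⟩) (h2 _ h)
  · omega

lemma singleton_tree {x : Finset Word} (hx : IsBinTree x) (hc : x.card = 1) :
    x = {[]} := by
  obtain ⟨a, ha⟩ := Finset.card_eq_one.mp hc
  subst ha
  by_cases h : a = []
  · rw [h]
  · exfalso
    have := hx a (Finset.mem_singleton_self a) h
    rw [Finset.mem_singleton] at this
    have hlen := congrArg List.length this
    rw [List.length_dropLast] at hlen
    have : a.length ≠ 0 := fun hc' => h (List.length_eq_zero_iff.mp hc')
    omega

lemma dropLast_ne_self {w : Word} (h : w ≠ []) : w.dropLast ≠ w := by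
  intro hc
  have hlen := congrArg List.length hc
  rw [List.length_dropLast] at hlen
  have : w.length ≠ 0 := fun hc' => h (List.length_eq_zero_iff.mp hc')
  omega

section Main

variable {Ω : Type*} [MeasurableSpace Ω] (X : ℕ → Ω → Finset Word)

def Ev (t N : ℕ) (v : Fin (t + N) → Word) : Set Ω :=
  {ω | ∀ j < t + N + 1, X j ω = treeAt v j}

lemma mem_Ev_entryTime {u : Word} {t N : ℕ} {v : Fin (t + N) → Word}
    (hτv : condTau u t v) {ω : Ω} (hω : ω ∈ Ev X t N v) :
    entryTime (fun m => X m ω) u = t ∧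
      ∀ n < N, locInc (fun m => X m ω) u n = patY u t v n := by
  have hX : ∀ j, j ≤ t + N → X j ω = treeAt v j := fun j hj => hω j (by omega)
  have hτ : entryTime (fun m => X m ω) u = t := by
    apply sInf_eq_of_mem
    · show u ∈ X t ω
      rw [hX t (by omega)]
      exact hτv.1
    · intro j hj
      show u ∉ X j ω
      rw [hX j (by omega)]
      exact hτv.2 j hj
  refine ⟨hτ, fun n hn => ?_⟩
  rw [locInc_eq_val, hτ, hX (t + n) (by omega), hX (t + n + 1) (by omega)]
  rfl

lemma measurableSet_Ev (hXmeas : ∀ n, Measurable (X n)) (t N : ℕ)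
    (v : Fin (t + N) → Word) : MeasurableSet (Ev X t N v) := by
  have : Ev X t N v = ⋂ (j : ℕ) (_ : j < t + N + 1), (X j) ⁻¹' {treeAt v j} := by
    ext ω
    simp [Ev, Set.mem_iInter]
  rw [this]
  exact MeasurableSet.iInter fun j => MeasurableSet.iInter fun _ =>
    (hXmeas j) (measurableSet_singleton _)

lemma Ev_disjoint {u : Word} {N : ℕ} {d : ℕ → ℤ} {t t' : ℕ}
    {v : Fin (t + N) → Word} {v' : Fin (t' + N) → Word}
    (hv : v ∈ Idx u t N d) (hv' : v' ∈ Idx u t' N d)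
    (hne : ¬(t = t' ∧ HEq v v')) {ω : Ω}
    (h1 : ω ∈ Ev X t N v) (h2 : ω ∈ Ev X t' N v') : False := by
  rcases Nat.lt_trichotomy t t' with hlt | heq | hgt
  · have hu1 : u ∈ X t ω := by rw [h1 t (by omega)]; exact hv.2.1.1
    have hu2 : u ∉ X t ω := by rw [h2 t (by omega)]; exact hv'.2.1.2 t hlt
    exact hu2 hu1
  · subst heq
    have hvv : v ≠ v' := fun hc => hne ⟨rfl, heq_of_eq hc⟩
    classical
    have hex : ∃ k, ∃ h : k < t + N, v ⟨k, h⟩ ≠ v' ⟨k, h⟩ := by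
      by_contra hc
      push_neg at hc
      exact hvv (funext fun i => by
        have := hc i.1 i.isLt
        simpa [Fin.eta] using this)
    set k₀ := Nat.find hex with hk₀
    obtain ⟨hk₀lt, hk₀ne⟩ := Nat.find_spec hex
    have hmin : ∀ i : Fin (t + N), (i : ℕ) < k₀ → v i = v' i := by
      intro i hi
      have := Nat.find_min hex hi
      push_neg at this
      have h := this i.isLt
      simpa [Fin.eta] using h
    have htr : treeAt v k₀ = treeAt v' k₀ := treeAt_congr hmin
    have e1 : X (k₀ + 1) ω = insert (v ⟨k₀, hk₀lt⟩) (treeAt v k₀) := by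
      rw [h1 (k₀ + 1) (by omega), treeAt_succ v hk₀lt]
    have e2 : X (k₀ + 1) ω = insert (v' ⟨k₀, hk₀lt⟩) (treeAt v' k₀) := by
      rw [h2 (k₀ + 1) (by omega), treeAt_succ v' hk₀lt]
    have hmem : v ⟨k₀, hk₀lt⟩ ∈ insert (v' ⟨k₀, hk₀lt⟩) (treeAt v' k₀) := by
      rw [← e2, e1]
      exact Finset.mem_insert_self _ _
    rcases Finset.mem_insert.mp hmem with hc | hc
    · exact hk₀ne hc
    · rw [← htr] at hc
      exact (hv.1 ⟨k₀, hk₀lt⟩).1 hc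
  · have hu1 : u ∈ X t' ω := by rw [h2 t' (by omega)]; exact hv'.2.1.1
    have hu2 : u ∉ X t' ω := by rw [h1 t' (by omega)]; exact hv.2.1.2 t' hgt
    exact hu2 hu1

lemma exists_idx {u : Word} {N : ℕ} {d : ℕ → ℤ} {ω : Ω}
    (hg : ∀ n, IsBinTree (X n ω) ∧ (X n ω).card = n + 1 ∧ X n ω ⊆ X (n + 1) ω)
    (hall : ∀ w : Word, ∃ n, w ∈ X n ω)
    (hE : ∀ n < N, locInc (fun m => X m ω) u n = d n) :
    ∃ (t : ℕ) (v : Fin (t + N) → Word), v ∈ Idx u t N d ∧ ω ∈ Ev X t N v := by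
  classical
  set t := entryTime (fun m => X m ω) u with ht
  have hSne : {n | u ∈ X n ω}.Nonempty := hall u
  have hmemt : u ∈ X t ω := Nat.sInf_mem hSne
  have hltt : ∀ j < t, u ∉ X j ω := fun j hj => Nat.notMem_of_lt_sInf hj
  have hmono : ∀ {a b : ℕ}, a ≤ b → X a ω ⊆ X b ω := by
    intro a b hab
    induction b with
    | zero => rw [Nat.le_zero.mp hab]
    | succ b ih =>
      rcases Nat.lt_or_ge a (b + 1) with h | h
      · exact (ih (by omega)).trans (hg b).2.2
      · rw [Nat.le_antisymm hab h]
  have hx0 : X 0 ω = {[]} := singleton_tree (hg 0).1 (hg 0).2.1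
  have hvex : ∀ i : Fin (t + N), ∃ w, X ((i : ℕ) + 1) ω \ X (i : ℕ) ω = {w} := by
    intro i
    apply Finset.card_eq_one.mp
    rw [Finset.card_sdiff_of_subset (hg (i : ℕ)).2.2, (hg ((i : ℕ) + 1)).2.1, (hg (i : ℕ)).2.1]
    omega
  choose v hv using hvex
  have hnm : ∀ i : Fin (t + N), v i ∉ X (i : ℕ) ω := by
    intro i
    have : v i ∈ X ((i : ℕ) + 1) ω \ X (i : ℕ) ω := by
      rw [hv i]; exact Finset.mem_singleton_self _
    exact (Finset.mem_sdiff.mp this).2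
  have hmm : ∀ i : Fin (t + N), v i ∈ X ((i : ℕ) + 1) ω := by
    intro i
    have : v i ∈ X ((i : ℕ) + 1) ω \ X (i : ℕ) ω := by
      rw [hv i]; exact Finset.mem_singleton_self _
    exact (Finset.mem_sdiff.mp this).1
  have hins : ∀ i : Fin (t + N), X ((i : ℕ) + 1) ω = insert (v i) (X (i : ℕ) ω) := by
    intro i
    ext a
    rw [Finset.mem_insert]
    constructor
    · intro ha
      by_cases h : a ∈ X (i : ℕ) ω
      · exact Or.inr h
      · left
        have : a ∈ X ((i : ℕ) + 1) ω \ X (i : ℕ) ω := Finset.mem_sdiff.mpr ⟨ha, h⟩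
        rw [hv i, Finset.mem_singleton] at this
        exact this
    · rintro (rfl | ha)
      · exact hmm i
      · exact (hg (i : ℕ)).2.2 ha
  have htreq : ∀ j ≤ t + N, treeAt v j = X j ω := by
    intro j hj
    induction j with
    | zero => rw [treeAt_zero, hx0]
    | succ j ih =>
      have hjlt : j < t + N := by omega
      rw [treeAt_succ v hjlt, ih (by omega), ← hins ⟨j, hjlt⟩]
  have hval : Valid v := by
    intro i
    have hit : (i : ℕ) ≤ t + N := le_of_lt i.isLt
    rw [htreq (i : ℕ) hit]
    refine ⟨hnm i, ?_, ?_⟩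
    · intro hc
      apply hnm i
      rw [hc]
      exact hmono (Nat.zero_le _) (by rw [hx0]; exact Finset.mem_singleton_self _)
    · have hne : v i ≠ [] := by
        intro hc
        apply hnm i
        rw [hc]
        exact hmono (Nat.zero_le _) (by rw [hx0]; exact Finset.mem_singleton_self _)
      have hdl : (v i).dropLast ∈ X ((i : ℕ) + 1) ω := (hg ((i : ℕ) + 1)).1 _ (hmm i) hne
      rw [hins i, Finset.mem_insert] at hdl
      rcases hdl with hc | hc
      · exact absurd hc (dropLast_ne_self hne)
      · exact hc
  have hτv : condTau u t v := by
    constructor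
    · rw [htreq t (by omega)]; exact hmemt
    · intro j hj
      rw [htreq j (by omega)]
      exact hltt j hj
  have hEv : ω ∈ Ev X t N v := fun j hj => (htreq j (by omega)).symm
  refine ⟨t, v, ⟨hval, hτv, ?_⟩, hEv⟩
  intro n hn
  have := (mem_Ev_entryTime X hτv hEv).2 n hn
  rw [← this]
  exact hE n hn

end Main


lemma measurable_prodCyl {m : ℕ} (v : Fin m → Word) :
    Measurable (fun μ : Measure BSeq => ∏ i, μ (cyl (v i))) :=
  Finset.measurable_prod _ fun i _ => Measure.measurable_coe (measurableSet_cyl (v i))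

section Thm

variable {Ω : Type*} [MeasurableSpace Ω] (P : Measure Ω) [IsProbabilityMeasure P]
  (X : ℕ → Ω → Finset Word) (M : Ω → Measure BSeq)

lemma P_Ev
    (hcond : ∀ (k : ℕ) (x : ℕ → Finset Word) (v : ℕ → Word),
      x 0 = {([] : Word)} →
      (∀ i < k, IsBinTree (x i)) →
      (∀ i, i + 1 < k → v (i + 1) ∉ x i ∧ x (i + 1) = insert (v (i + 1)) (x i)) →
      ∀ B : Set (Measure BSeq), MeasurableSet B →
        P ({ω | ∀ i < k, X i ω = x i} ∩ M ⁻¹' B)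
          = ∫⁻ μ in B, ∏ i ∈ Finset.Ico 1 k, μ (cyl (v i)) ∂(Measure.map M P))
    {t N : ℕ} (v : Fin (t + N) → Word) (hval : Valid v) :
    P (Ev X t N v) = ∫⁻ μ, ∏ i, μ (cyl (v i)) ∂(Measure.map M P) := by
  classical
  set vExt : ℕ → Word := fun j => if h : j - 1 < t + N then v ⟨j - 1, h⟩ else [] with hvExt
  have h := hcond (t + N + 1) (fun j => treeAt v j) vExt (treeAt_zero v)
    (fun i _ => hval.isBinTree i)
    (by
      intro i hi
      have hilt : i < t + N := by omega
      have he : vExt (i + 1) = v ⟨i, hilt⟩ := by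
        rw [hvExt]
        simp only [Nat.add_sub_cancel]
        rw [dif_pos hilt]
      rw [he]
      exact ⟨(hval ⟨i, hilt⟩).1, treeAt_succ v hilt⟩)
    Set.univ MeasurableSet.univ
  rw [Set.preimage_univ, Set.inter_univ, Measure.restrict_univ] at h
  have hEv : {ω | ∀ i < t + N + 1, X i ω = treeAt v i} = Ev X t N v := rfl
  rw [hEv] at h
  rw [h]
  apply lintegral_congr
  intro μ
  rw [Finset.prod_Ico_eq_prod_range]
  simp only [Nat.add_sub_cancel]
  rw [← Fin.prod_univ_eq_prod_range (fun j => μ (cyl (vExt (1 + j)))) (t + N)]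
  apply Finset.prod_congr rfl
  intro i _
  congr 2
  rw [hvExt]
  have h1 : 1 + (i : ℕ) - 1 = (i : ℕ) := by omega
  simp only [h1]
  rw [dif_pos i.isLt, Fin.eta]

lemma P_pattern
    (hXmeas : ∀ n, Measurable (X n))
    (hpath : ∀ᵐ ω ∂P,
      (∀ n, IsBinTree (X n ω) ∧ (X n ω).card = n + 1 ∧ X n ω ⊆ X (n + 1) ω) ∧
      ∀ w : Word, ∃ n, w ∈ X n ω)
    (hcond : ∀ (k : ℕ) (x : ℕ → Finset Word) (v : ℕ → Word),
      x 0 = {([] : Word)} →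
      (∀ i < k, IsBinTree (x i)) →
      (∀ i, i + 1 < k → v (i + 1) ∉ x i ∧ x (i + 1) = insert (v (i + 1)) (x i)) →
      ∀ B : Set (Measure BSeq), MeasurableSet B →
        P ({ω | ∀ i < k, X i ω = x i} ∩ M ⁻¹' B)
          = ∫⁻ μ in B, ∏ i ∈ Finset.Ico 1 k, μ (cyl (v i)) ∂(Measure.map M P))
    (u : Word) (N : ℕ) (d : ℕ → ℤ) :
    P {ω | ∀ n < N, locInc (fun m => X m ω) u n = d n}
      = ∑' (t : ℕ), ∫⁻ μ, (∑' v : Idx u t N d,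
          ∏ i, μ (cyl ((v : Fin (t + N) → Word) i))) ∂(Measure.map M P) := by
  classical
  set E := {ω | ∀ n < N, locInc (fun m => X m ω) u n = d n} with hE
  set F : (Σ t : ℕ, ↥(Idx u t N d)) → Set Ω :=
    fun p => Ev X p.1 N (p.2 : Fin (p.1 + N) → Word) with hF
  have hsub1 : ∀ p, F p ⊆ E := by
    rintro ⟨t, v, hvIdx⟩ ω hω
    intro n hn
    have h2 := (mem_Ev_entryTime X hvIdx.2.1 hω).2
    rw [h2 n hn]
    exact hvIdx.2.2 n hn
  have hbad : P {ω | ¬ ((∀ n, IsBinTree (X n ω) ∧ (X n ω).card = n + 1 ∧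
      X n ω ⊆ X (n + 1) ω) ∧ ∀ w : Word, ∃ n, w ∈ X n ω)} = 0 := by
    rw [← ae_iff]
    exact hpath
  have hPU : P E = P (⋃ p, F p) := by
    apply le_antisymm
    · have hEsub : E ⊆ (⋃ p, F p) ∪ {ω | ¬ ((∀ n, IsBinTree (X n ω) ∧
          (X n ω).card = n + 1 ∧ X n ω ⊆ X (n + 1) ω) ∧ ∀ w : Word, ∃ n, w ∈ X n ω)} := by
        intro ω hω
        by_cases hg : (∀ n, IsBinTree (X n ω) ∧ (X n ω).card = n + 1 ∧
            X n ω ⊆ X (n + 1) ω) ∧ ∀ w : Word, ∃ n, w ∈ X n ω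
        · left
          obtain ⟨t, v, hIdx, hEv⟩ := exists_idx X hg.1 hg.2 hω
          exact Set.mem_iUnion.mpr ⟨⟨t, ⟨v, hIdx⟩⟩, hEv⟩
        · right
          exact hg
      calc P E ≤ P ((⋃ p, F p) ∪ _) := measure_mono hEsub
        _ ≤ P (⋃ p, F p) + _ := measure_union_le _ _
        _ = P (⋃ p, F p) := by rw [hbad, add_zero]
    · exact measure_mono (Set.iUnion_subset hsub1)
  have hdisj : Pairwise (Function.onFun Disjoint F) := by
    rintro ⟨t, v, hv⟩ ⟨t', v', hv'⟩ hne
    rw [Function.onFun, Set.disjoint_left]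
    intro ω h1 h2
    refine Ev_disjoint X hv hv' ?_ h1 h2
    rintro ⟨rfl, hheq⟩
    apply hne
    have hvv := eq_of_heq hheq
    subst hvv
    rfl
  have hmeas : ∀ p, MeasurableSet (F p) := fun p => measurableSet_Ev X hXmeas _ _ _
  rw [hPU, measure_iUnion hdisj hmeas]
  have hterm : ∀ p : (Σ t : ℕ, ↥(Idx u t N d)), P (F p)
      = ∫⁻ μ, ∏ i, μ (cyl ((p.2 : Fin (p.1 + N) → Word) i)) ∂(Measure.map M P) := by
    rintro ⟨t, v, hv⟩
    exact P_Ev P X M hcond v hv.1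
  rw [tsum_congr hterm, ENNReal.tsum_sigma']
  apply tsum_congr
  intro t
  rw [← lintegral_tsum fun v => (measurable_prodCyl _).aemeasurable]

lemma P_pattern_perm
    (hXmeas : ∀ n, Measurable (X n))
    (hpath : ∀ᵐ ω ∂P,
      (∀ n, IsBinTree (X n ω) ∧ (X n ω).card = n + 1 ∧ X n ω ⊆ X (n + 1) ω) ∧
      ∀ w : Word, ∃ n, w ∈ X n ω)
    (hMmeas : Measurable M)
    (hMprob : ∀ ω, IsProbabilityMeasure (M ω))
    (hcond : ∀ (k : ℕ) (x : ℕ → Finset Word) (v : ℕ → Word),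
      x 0 = {([] : Word)} →
      (∀ i < k, IsBinTree (x i)) →
      (∀ i, i + 1 < k → v (i + 1) ∉ x i ∧ x (i + 1) = insert (v (i + 1)) (x i)) →
      ∀ B : Set (Measure BSeq), MeasurableSet B →
        P ({ω | ∀ i < k, X i ω = x i} ∩ M ⁻¹' B)
          = ∫⁻ μ in B, ∏ i ∈ Finset.Ico 1 k, μ (cyl (v i)) ∂(Measure.map M P))
    (u : Word) (N : ℕ) (d : ℕ → ℤ) (π : Equiv.Perm ℕ)
    (hπ : ∀ n < N, π n < N) (hπ' : ∀ n < N, π.symm n < N) :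
    P {ω | ∀ n < N, locInc (fun m => X m ω) u n = d (π.symm n)}
      = P {ω | ∀ n < N, locInc (fun m => X m ω) u n = d n} := by
  have h1 := P_pattern P X M hXmeas hpath hcond u N (fun n => d (π.symm n))
  have h2 := P_pattern P X M hXmeas hpath hcond u N d
  rw [h1, h2]
  apply tsum_congr
  intro t
  have hae : ∀ᵐ μ ∂(Measure.map M P), μ Set.univ = 1 := by
    rw [ae_iff]
    have hs : MeasurableSet {μ : Measure BSeq | ¬ μ Set.univ = 1} :=
      ((Measure.measurable_coe MeasurableSet.univ) (measurableSet_singleton 1)).compl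
    rw [Measure.map_apply hMmeas hs]
    have : M ⁻¹' {μ : Measure BSeq | ¬ μ Set.univ = 1} = ∅ := by
      ext ω
      simp [(hMprob ω).measure_univ]
    rw [this, measure_empty]
  apply lintegral_congr_ae
  filter_upwards [hae] with μ hμ
  haveI : IsProbabilityMeasure μ := ⟨hμ⟩
  exact core_perm π hπ hπ' u d μ

end Thm


/-! ### Measurability of the increment process -/

section Meas

variable {Ω : Type*} [MeasurableSpace Ω] (X : ℕ → Ω → Finset Word)

lemma measurableSet_finsetWord (s : Set (Finset Word)) : MeasurableSet s :=
  MeasurableSpace.measurableSet_top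

lemma measurable_entryTime (hXmeas : ∀ n, Measurable (X n)) (u : Word) :
    Measurable (fun ω => entryTime (fun m => X m ω) u) := by
  have hmem : ∀ j, MeasurableSet {ω | u ∈ X j ω} := fun j =>
    (hXmeas j) (measurableSet_finsetWord {x | u ∈ x})
  apply measurable_to_countable'
  intro t
  have hchar : ∀ ω, entryTime (fun m => X m ω) u = t ↔
      ((∀ j < t, u ∉ X j ω) ∧ (u ∈ X t ω ∨ (t = 0 ∧ ∀ j, u ∉ X j ω))) := by
    intro ω
    constructor
    · intro h
      subst h
      refine ⟨fun j hj => Nat.notMem_of_lt_sInf hj, ?_⟩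
      by_cases hne : {n | u ∈ X n ω}.Nonempty
      · exact Or.inl (Nat.sInf_mem hne)
      · rw [Set.not_nonempty_iff_eq_empty] at hne
        refine Or.inr ⟨?_, fun j hj => ?_⟩
        · show sInf {n | u ∈ X n ω} = 0
          rw [hne, Nat.sInf_empty]
        · have : j ∈ {n | u ∈ X n ω} := hj
          rw [hne] at this
          exact this
    · rintro ⟨h1, h2 | ⟨rfl, h3⟩⟩
      · exact sInf_eq_of_mem h2 h1
      · show sInf {n | u ∈ X n ω} = 0
        have : {n | u ∈ X n ω} = ∅ := Set.eq_empty_iff_forall_notMem.mpr h3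
        rw [this, Nat.sInf_empty]
  by_cases ht : t = 0
  · subst ht
    have hset : (fun ω => entryTime (fun m => X m ω) u) ⁻¹' {0}
        = {ω | u ∈ X 0 ω} ∪ ⋂ (j : ℕ), {ω | u ∈ X j ω}ᶜ := by
      ext ω
      simp only [Set.mem_preimage, Set.mem_singleton_iff, hchar ω, Set.mem_union,
        Set.mem_iInter, Set.mem_compl_iff, Set.mem_setOf_eq]
      constructor
      · rintro ⟨_, h | ⟨_, h3⟩⟩
        · exact Or.inl h
        · exact Or.inr h3
      · rintro (h | h)
        · exact ⟨fun j hj => by omega, Or.inl h⟩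
        · exact ⟨fun j hj => by omega, Or.inr ⟨trivial, h⟩⟩
    rw [hset]
    exact (hmem 0).union (MeasurableSet.iInter fun j => (hmem j).compl)
  · have hset : (fun ω => entryTime (fun m => X m ω) u) ⁻¹' {t}
        = (⋂ (j : ℕ), ⋂ (_ : j < t), {ω | u ∈ X j ω}ᶜ) ∩ {ω | u ∈ X t ω} := by
      ext ω
      simp only [Set.mem_preimage, Set.mem_singleton_iff, hchar ω, Set.mem_inter_iff,
        Set.mem_iInter, Set.mem_compl_iff, Set.mem_setOf_eq]
      constructor
      · rintro ⟨h1, h | ⟨ht0, _⟩⟩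
        · exact ⟨h1, h⟩
        · exact absurd ht0 ht
      · rintro ⟨h1, h2⟩
        exact ⟨h1, Or.inl h2⟩
    rw [hset]
    exact (MeasurableSet.iInter fun j => MeasurableSet.iInter fun _ =>
      (hmem j).compl).inter (hmem t)

lemma measurable_X_shift (hXmeas : ∀ n, Measurable (X n)) (u : Word) (n : ℕ) :
    Measurable (fun ω => X (entryTime (fun m => X m ω) u + n) ω) := by
  apply measurable_to_countable'
  intro a
  have hset : (fun ω => X (entryTime (fun m => X m ω) u + n) ω) ⁻¹' {a}
      = ⋃ (t : ℕ), ((fun ω => entryTime (fun m => X m ω) u) ⁻¹' {t}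
          ∩ (X (t + n)) ⁻¹' {a}) := by
    ext ω
    simp only [Set.mem_preimage, Set.mem_singleton_iff, Set.mem_iUnion, Set.mem_inter_iff]
    constructor
    · intro h
      exact ⟨entryTime (fun m => X m ω) u, rfl, h⟩
    · rintro ⟨t, h1, h2⟩
      rw [h1]
      exact h2
  rw [hset]
  exact MeasurableSet.iUnion fun t =>
    ((measurable_entryTime X hXmeas u) (measurableSet_singleton t)).inter
      ((hXmeas (t + n)) (measurableSet_singleton a))

lemma measurable_locInc (hXmeas : ∀ n, Measurable (X n)) (u : Word) (n : ℕ) :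
    Measurable (fun ω => locInc (fun m => X m ω) u n) := by
  have heq : (fun ω => locInc (fun m => X m ω) u n)
      = (fun p : Finset Word × Finset Word => val u p.1 p.2)
        ∘ (fun ω => (X (entryTime (fun m => X m ω) u + n) ω,
            X (entryTime (fun m => X m ω) u + n + 1) ω)) := by
    funext ω
    exact locInc_eq_val _ u n
  rw [heq]
  exact (measurable_of_countable _).comp
    ((measurable_X_shift X hXmeas u n).prodMk
      (measurable_X_shift X hXmeas u (n + 1)))

end Meas


/-! ### Cylinder decompositions -/

section Cyl

variable {Ω : Type*} [MeasurableSpace Ω] (P : Measure Ω) (Y : ℕ → Ω → ℤ)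

lemma pattern_decomp (hY : ∀ n, Measurable (Y n)) (σ : ℕ → ℕ) (s : Finset ℕ)
    (c : ∀ i : s, ℤ) (N : ℕ) (hsN : ∀ n ∈ s, n < N) :
    P {ω | ∀ i : s, Y (σ (i : ℕ)) ω = c i}
      = ∑' g : {g : Fin N → ℤ // ∀ (i : Fin N) (h : (i : ℕ) ∈ s), g i = c ⟨(i : ℕ), h⟩},
          P {ω | ∀ n < N, Y (σ n) ω
              = (fun k => if h : k < N then (g : Fin N → ℤ) ⟨k, h⟩ else 0) n} := by
  classical
  set Sub := {g : Fin N → ℤ // ∀ (i : Fin N) (h : (i : ℕ) ∈ s), g i = c ⟨(i : ℕ), h⟩}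
  set A : Sub → Set Ω := fun g =>
    {ω | ∀ n < N, Y (σ n) ω = (fun k => if h : k < N then (g : Fin N → ℤ) ⟨k, h⟩ else 0) n}
    with hA
  have hset : {ω | ∀ i : s, Y (σ (i : ℕ)) ω = c i} = ⋃ g : Sub, A g := by
    ext ω
    simp only [Set.mem_setOf_eq, Set.mem_iUnion]
    constructor
    · intro h
      refine ⟨⟨fun i => Y (σ (i : ℕ)) ω, fun i hi => h ⟨(i : ℕ), hi⟩⟩, ?_⟩
      intro n hn
      simp only [dif_pos hn]
    · rintro ⟨⟨g, hg⟩, hω⟩ i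
      have hi : (i : ℕ) < N := hsN _ i.2
      have := hω (i : ℕ) hi
      simp only [dif_pos hi] at this
      rw [this, hg ⟨(i : ℕ), hi⟩ i.2]
  have hdisj : Pairwise (Function.onFun Disjoint A) := by
    rintro ⟨g, hg⟩ ⟨g', hg'⟩ hne
    rw [Function.onFun, Set.disjoint_left]
    intro ω h1 h2
    apply hne
    apply Subtype.ext
    funext i
    have e1 := h1 (i : ℕ) i.isLt
    have e2 := h2 (i : ℕ) i.isLt
    simp only [dif_pos i.isLt, Fin.eta] at e1 e2
    show g i = g' i
    rw [← e1, ← e2]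
  have hmeas : ∀ g : Sub, MeasurableSet (A g) := by
    intro g
    have : A g = ⋂ (n : ℕ) (_ : n < N),
        (Y (σ n)) ⁻¹' {(fun k => if h : k < N then (g : Fin N → ℤ) ⟨k, h⟩ else 0) n} := by
      ext ω
      simp [hA, Set.mem_iInter]
    rw [this]
    exact MeasurableSet.iInter fun n => MeasurableSet.iInter fun _ =>
      (hY (σ n)) (measurableSet_singleton _)
  rw [hset, measure_iUnion hdisj hmeas]

lemma cylinder_step (hY : ∀ n, Measurable (Y n)) (σ : ℕ → ℕ) (s : Finset ℕ)
    (T : Set (∀ i : s, ℤ)) :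
    P {ω | s.restrict (fun n => Y (σ n) ω) ∈ T}
      = ∑' c : T, P {ω | ∀ i : s, Y (σ (i : ℕ)) ω = (c : ∀ i : s, ℤ) i} := by
  classical
  set A : T → Set Ω := fun c => {ω | ∀ i : s, Y (σ (i : ℕ)) ω = (c : ∀ i : s, ℤ) i} with hA
  have hset : {ω | s.restrict (fun n => Y (σ n) ω) ∈ T} = ⋃ c : T, A c := by
    ext ω
    simp only [Set.mem_setOf_eq, Set.mem_iUnion]
    constructor
    · intro h
      exact ⟨⟨s.restrict (fun n => Y (σ n) ω), h⟩, fun i => rfl⟩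
    · rintro ⟨⟨c, hc⟩, hω⟩
      have : s.restrict (fun n => Y (σ n) ω) = c := funext fun i => hω i
      rwa [this]
  have hdisj : Pairwise (Function.onFun Disjoint A) := by
    rintro ⟨c, hc⟩ ⟨c', hc'⟩ hne
    rw [Function.onFun, Set.disjoint_left]
    intro ω h1 h2
    apply hne
    apply Subtype.ext
    funext i
    rw [← h1 i, ← h2 i]
  have hmeas : ∀ c : T, MeasurableSet (A c) := by
    intro c
    have : A c = ⋂ i : s, (Y (σ (i : ℕ))) ⁻¹' {(c : ∀ i : s, ℤ) i} := by
      ext ω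
      simp [hA, Set.mem_iInter]
    rw [this]
    exact MeasurableSet.iInter fun i => (hY (σ (i : ℕ))) (measurableSet_singleton _)
  rw [hset, measure_iUnion hdisj hmeas]

lemma perm_pattern_set {N : ℕ} (π : Equiv.Perm ℕ) (hπN : ∀ n < N, π n < N)
    (hπN' : ∀ n < N, π.symm n < N) (d : ℕ → ℤ) :
    {ω | ∀ n < N, Y (π n) ω = d n} = {ω | ∀ n < N, Y n ω = d (π.symm n)} := by
  ext ω
  simp only [Set.mem_setOf_eq]
  constructor
  · intro h m hm
    have := h (π.symm m) (hπN' m hm)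
    rwa [Equiv.apply_symm_apply] at this
  · intro h n hn
    have := h (π n) (hπN n hn)
    rwa [Equiv.symm_apply_apply] at this

end Cyl


/-- Converse of the representation theorem: if the random growing tree sequence `X` is,
conditionally on a random full-support probability measure `M` on `V_∞`, distributed as
`DST(M)` (the conditional law being expressed through the generating cylinder events of
the path space, where `Π_{i=1}^{k-1} μ(B_{v_i}) = DST(μ)({X_i = x_i ∀ i < k})`), then `X`
is locally exchangeable: every local increment process `Y(u)` is exchangeable. -/
theorem stmt16 {Ω : Type*} [MeasurableSpace Ω] (P : Measure Ω) [IsProbabilityMeasure P]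
    (X : ℕ → Ω → Finset Word) (hXmeas : ∀ n, Measurable (X n))
    (hpath : ∀ᵐ ω ∂P,
      (∀ n, IsBinTree (X n ω) ∧ (X n ω).card = n + 1 ∧ X n ω ⊆ X (n + 1) ω) ∧
      ∀ w : Word, ∃ n, w ∈ X n ω)
    (M : Ω → Measure BSeq) (hMmeas : Measurable M)
    (hMprob : ∀ ω, IsProbabilityMeasure (M ω))
    (hMfull : ∀ᵐ ω ∂P, ∀ u : Word, 0 < M ω (cyl u))
    (hcond : ∀ (k : ℕ) (x : ℕ → Finset Word) (v : ℕ → Word),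
      x 0 = {([] : Word)} →
      (∀ i < k, IsBinTree (x i)) →
      (∀ i, i + 1 < k → v (i + 1) ∉ x i ∧ x (i + 1) = insert (v (i + 1)) (x i)) →
      ∀ B : Set (Measure BSeq), MeasurableSet B →
        P ({ω | ∀ i < k, X i ω = x i} ∩ M ⁻¹' B)
          = ∫⁻ μ in B, ∏ i ∈ Finset.Ico 1 k, μ (cyl (v i)) ∂(Measure.map M P)) :
    ∀ u : Word, Exchangeable P (fun n ω => locInc (fun m => X m ω) u n) := by
  intro u π hfin
  classical
  have hYmeas : ∀ n, Measurable (fun ω => locInc (fun m => X m ω) u n) :=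
    fun n => measurable_locInc X hXmeas u n
  have hmeas1 : Measurable (fun ω => fun n => locInc (fun m => X m ω) u (π n)) :=
    measurable_pi_lambda _ (fun n => hYmeas (π n))
  have hmeas2 : Measurable (fun ω => fun n => locInc (fun m => X m ω) u n) :=
    measurable_pi_lambda _ (fun n => hYmeas n)
  haveI hp1 : IsProbabilityMeasure
      (Measure.map (fun ω => fun n => locInc (fun m => X m ω) u (π n)) P) :=
    Measure.isProbabilityMeasure_map hmeas1.aemeasurable
  haveI hp2 : IsProbabilityMeasure
      (Measure.map (fun ω => fun n => locInc (fun m => X m ω) u n) P) :=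
    Measure.isProbabilityMeasure_map hmeas2.aemeasurable
  apply ext_of_generate_finite (measurableCylinders fun _ : ℕ => ℤ)
    generateFrom_measurableCylinders.symm isPiSystem_measurableCylinders ?_
    (by rw [measure_univ, measure_univ])
  intro S hS
  obtain ⟨s, T, hT, rfl⟩ := (mem_measurableCylinders _).mp hS
  rw [Measure.map_apply hmeas1 hT.cylinder, Measure.map_apply hmeas2 hT.cylinder]
  -- choose a bound N
  set Nb := (s.sup id + (hfin.toFinset).sup id) + 1 with hNb
  have hsN : ∀ n ∈ s, n < Nb := by
    intro n hn
    have := Finset.le_sup (f := id) hn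
    simp only [id] at this
    omega
  have hsupp : ∀ n, π n ≠ n → n < Nb := by
    intro n hn
    have hmem : n ∈ hfin.toFinset := hfin.mem_toFinset.mpr hn
    have := Finset.le_sup (f := id) hmem
    simp only [id] at this
    omega
  have hπN : ∀ n < Nb, π n < Nb := by
    intro n hn
    by_cases h : π n = n
    · rwa [h]
    · exact hsupp (π n) (fun hc => h (π.injective hc))
  have hπN2 : ∀ n < Nb, π.symm n < Nb := by
    intro n hn
    by_cases h : π.symm n = n
    · rwa [h]
    · apply hsupp
      rw [Equiv.apply_symm_apply]
      exact fun hc => h hc.symm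
  have e1 : P ((fun ω => fun n => locInc (fun m => X m ω) u (π n)) ⁻¹' cylinder s T)
      = ∑' c : T, P {ω | ∀ i : s,
          locInc (fun m => X m ω) u (π (i : ℕ)) = (c : ∀ i : s, ℤ) i} :=
    cylinder_step P (fun n ω => locInc (fun m => X m ω) u n) hYmeas (fun n => π n) s T
  have e2 : P ((fun ω => fun n => locInc (fun m => X m ω) u n) ⁻¹' cylinder s T)
      = ∑' c : T, P {ω | ∀ i : s,
          locInc (fun m => X m ω) u (i : ℕ) = (c : ∀ i : s, ℤ) i} :=
    cylinder_step P (fun n ω => locInc (fun m => X m ω) u n) hYmeas (fun n => n) s T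
  rw [e1, e2]
  apply tsum_congr
  intro c
  have e3 : P {ω | ∀ i : s, locInc (fun m => X m ω) u (π (i : ℕ)) = (c : ∀ i : s, ℤ) i}
      = ∑' g : {g : Fin Nb → ℤ //
            ∀ (i : Fin Nb) (h : (i : ℕ) ∈ s), g i = (c : ∀ i : s, ℤ) ⟨(i : ℕ), h⟩},
          P {ω | ∀ n < Nb, locInc (fun m => X m ω) u (π n)
              = (fun k => if h : k < Nb then (g : Fin Nb → ℤ) ⟨k, h⟩ else 0) n} :=
    pattern_decomp P (fun n ω => locInc (fun m => X m ω) u n) hYmeas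
      (fun n => π n) s (c : ∀ i : s, ℤ) Nb hsN
  have e4 : P {ω | ∀ i : s, locInc (fun m => X m ω) u (i : ℕ) = (c : ∀ i : s, ℤ) i}
      = ∑' g : {g : Fin Nb → ℤ //
            ∀ (i : Fin Nb) (h : (i : ℕ) ∈ s), g i = (c : ∀ i : s, ℤ) ⟨(i : ℕ), h⟩},
          P {ω | ∀ n < Nb, locInc (fun m => X m ω) u n
              = (fun k => if h : k < Nb then (g : Fin Nb → ℤ) ⟨k, h⟩ else 0) n} :=
    pattern_decomp P (fun n ω => locInc (fun m => X m ω) u n) hYmeas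
      (fun n => n) s (c : ∀ i : s, ℤ) Nb hsN
  rw [e3, e4]
  apply tsum_congr
  intro g
  have hseteq : {ω | ∀ n < Nb, locInc (fun m => X m ω) u (π n)
        = (fun k => if h : k < Nb then (g : Fin Nb → ℤ) ⟨k, h⟩ else 0) n}
      = {ω | ∀ n < Nb, locInc (fun m => X m ω) u n
        = (fun k => if h : k < Nb then (g : Fin Nb → ℤ) ⟨k, h⟩ else 0) (π.symm n)} :=
    perm_pattern_set (fun n ω => locInc (fun m => X m ω) u n) π hπN hπN2 _
  rw [hseteq]
  exact P_pattern_perm P X M hXmeas hpath hMmeas hMprob hcond u Nb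
    (fun k => if h : k < Nb then (g : Fin Nb → ℤ) ⟨k, h⟩ else 0) π hπN hπN2

end DMTCS
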